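/- Let A₂ be a bounded self-adjoint operator on H₂ with spectral measure E₂, let B : H₁ → H₂ be a Hilbert–Schmidt operator, and let Y : H₁ → H₁ be a bounded operator with sup_{μ ∈ σ(A₂)} ‖(Y - μ)⁻¹‖ = C < ∞. Then the integral ∫_{σ(A₂)} E₂(dμ) B (Y - μ)⁻¹ exists as a bounded operator from H₁ to H₂, with norm at most C·‖B‖_HS. -/

import Mathlib

open ContinuousLinearMap

variable {H₁ H₂ : Type*} [NormedAddCommGroup H₁] [InnerProductSpace ℂ H₁] [CompleteSpace H₁]
  [NormedAddCommGroup H₂] [InnerProductSpace ℂ H₂] [CompleteSpace H₂]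

/-- A tagged finite partition of the set `σ ⊆ ℂ` into pieces of diameter at most `δ`. -/
def IsTaggedPartition (σ : Set ℂ) (δ : ℝ) {ι : Type} (s : Finset ι)
    (Δ : ι → Set ℂ) (t : ι → ℂ) : Prop :=
  (∀ i ∈ s, Δ i ⊆ σ ∧ t i ∈ Δ i ∧ Metric.diam (Δ i) ≤ δ) ∧
  (∀ i ∈ s, ∀ j ∈ s, i ≠ j → Disjoint (Δ i) (Δ j)) ∧
  σ = ⋃ i ∈ s, Δ i

/-- `T = ∫_σ E(dμ) ∘ f(μ)` in the sense of norm convergence of Riemann–Stieltjes-type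
sums `∑ᵢ E(Δᵢ) ∘ f(μᵢ)` over tagged partitions of `σ`. -/
def IsSpectralIntegral (E : Set ℂ → (H₂ →L[ℂ] H₂)) (σ : Set ℂ)
    (f : ℂ → (H₁ →L[ℂ] H₂)) (T : H₁ →L[ℂ] H₂) : Prop :=
  ∀ ε > 0, ∃ δ > 0, ∀ (ι : Type) (s : Finset ι) (Δ : ι → Set ℂ) (t : ι → ℂ),
    IsTaggedPartition σ δ s Δ t →
      ‖(∑ i ∈ s, E (Δ i) ∘L f (t i)) - T‖ < ε

/-- `E` is the spectral measure of the (bounded self-adjoint) operator `A`. -/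
structure IsSpectralMeasureFor (A : H₂ →L[ℂ] H₂) (E : Set ℂ → (H₂ →L[ℂ] H₂)) : Prop where
  selfAdjoint : ∀ S, IsSelfAdjoint (E S)
  inter : ∀ S S', E S ∘L E S' = E (S ∩ S')
  empty : E ∅ = 0
  total : E (spectrum ℂ A) = 1
  add : ∀ S S', Disjoint S S' → E (S ∪ S') = E S + E S'
  represents : IsSpectralIntegral E (spectrum ℂ A) (fun μ => μ • (1 : H₂ →L[ℂ] H₂)) A

set_option linter.unusedSectionVars false
set_option maxHeartbeats 1000000

section AuxLemmas

/-- ℓ² Cauchy–Schwarz for tsums. -/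
lemma aux_cs {κ : Type*} (a b : κ → ℝ) (ha : ∀ i, 0 ≤ a i) (hb : ∀ i, 0 ≤ b i)
    (ha2 : Summable fun i => a i ^ 2) (hb2 : Summable fun i => b i ^ 2) :
    Summable (fun i => a i * b i) ∧
      ∑' i, a i * b i ≤ Real.sqrt (∑' i, a i ^ 2) * Real.sqrt (∑' i, b i ^ 2) := by
  have key : ∀ s : Finset κ, ∑ i ∈ s, a i * b i ≤
      Real.sqrt (∑' i, a i ^ 2) * Real.sqrt (∑' i, b i ^ 2) := by
    intro s
    have h1 : (∑ i ∈ s, a i * b i) ^ 2 ≤ (∑ i ∈ s, a i ^ 2) * ∑ i ∈ s, b i ^ 2 :=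
      Finset.sum_mul_sq_le_sq_mul_sq s a b
    have h2 : ∑ i ∈ s, a i ^ 2 ≤ ∑' i, a i ^ 2 :=
      Summable.sum_le_tsum s (fun i _ => sq_nonneg _) ha2
    have h3 : ∑ i ∈ s, b i ^ 2 ≤ ∑' i, b i ^ 2 :=
      Summable.sum_le_tsum s (fun i _ => sq_nonneg _) hb2
    have hs : 0 ≤ ∑ i ∈ s, a i * b i :=
      Finset.sum_nonneg fun i _ => mul_nonneg (ha i) (hb i)
    have h4 : (∑ i ∈ s, a i * b i) ^ 2 ≤ (∑' i, a i ^ 2) * ∑' i, b i ^ 2 :=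
      h1.trans (mul_le_mul h2 h3 (Finset.sum_nonneg fun i _ => sq_nonneg _)
        ((Finset.sum_nonneg fun i _ => sq_nonneg _).trans h2))
    calc ∑ i ∈ s, a i * b i = Real.sqrt ((∑ i ∈ s, a i * b i) ^ 2) := (Real.sqrt_sq hs).symm
      _ ≤ Real.sqrt ((∑' i, a i ^ 2) * ∑' i, b i ^ 2) := Real.sqrt_le_sqrt h4
      _ = _ := Real.sqrt_mul (tsum_nonneg fun i => sq_nonneg _) _
  have hsum : Summable (fun i => a i * b i) :=
    summable_of_sum_le (fun i => mul_nonneg (ha i) (hb i)) key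
  exact ⟨hsum, Summable.tsum_le_of_sum_le hsum key⟩

/-- Operator norm bounded by Hilbert–Schmidt norm. -/
lemma aux_op_le_hs {κ : Type*} (e : HilbertBasis κ ℂ H₁) (T : H₁ →L[ℂ] H₂)
    (hT : Summable fun i => ‖T (e i)‖ ^ 2) :
    ‖T‖ ≤ Real.sqrt (∑' i, ‖T (e i)‖ ^ 2) := by
  refine opNorm_le_bound _ (Real.sqrt_nonneg _) fun x => ?_
  have hx : HasSum (fun i => e.repr x i • e i) x := e.hasSum_repr x
  have hTx : HasSum (fun i => e.repr x i • T (e i)) (T x) := by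
    have := hx.mapL T
    simpa using this
  have hb2 : Summable fun i => ‖e.repr x i‖ ^ 2 := by
    have := e.orthonormal.inner_products_summable x
    simpa [e.repr_apply_apply] using this
  obtain ⟨hsum, hle⟩ := aux_cs (fun i => ‖e.repr x i‖) (fun i => ‖T (e i)‖)
    (fun i => norm_nonneg _) (fun i => norm_nonneg _) hb2 hT
  have h1 : ‖T x‖ ≤ ∑' i, ‖e.repr x i‖ * ‖T (e i)‖ := by
    calc ‖T x‖ = ‖∑' i, e.repr x i • T (e i)‖ := by rw [hTx.tsum_eq]
      _ ≤ ∑' i, ‖e.repr x i • T (e i)‖ :=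
          norm_tsum_le_tsum_norm (by simpa [norm_smul] using hsum)
      _ = ∑' i, ‖e.repr x i‖ * ‖T (e i)‖ := by simp [norm_smul]
  have h2 : Real.sqrt (∑' i, ‖e.repr x i‖ ^ 2) ≤ ‖x‖ := by
    have hB : ∑' i, ‖e.repr x i‖ ^ 2 ≤ ‖x‖ ^ 2 := by
      have := e.orthonormal.tsum_inner_products_le x
      simpa [e.repr_apply_apply] using this
    calc Real.sqrt (∑' i, ‖e.repr x i‖ ^ 2) ≤ Real.sqrt (‖x‖ ^ 2) := Real.sqrt_le_sqrt hB
      _ = ‖x‖ := Real.sqrt_sq (norm_nonneg _)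
  calc ‖T x‖ ≤ ∑' i, ‖e.repr x i‖ * ‖T (e i)‖ := h1
    _ ≤ Real.sqrt (∑' i, ‖e.repr x i‖ ^ 2) * Real.sqrt (∑' i, ‖T (e i)‖ ^ 2) := hle
    _ ≤ ‖x‖ * Real.sqrt (∑' i, ‖T (e i)‖ ^ 2) :=
        mul_le_mul_of_nonneg_right h2 (Real.sqrt_nonneg _)
    _ = Real.sqrt (∑' i, ‖T (e i)‖ ^ 2) * ‖x‖ := mul_comm _ _

lemma aux_move (E : Set ℂ → (H₂ →L[ℂ] H₂)) (hsa : ∀ S, IsSelfAdjoint (E S)) (S : Set ℂ)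
    (y x : H₂) : (inner ℂ (E S y) x : ℂ) = inner ℂ y (E S x) := by
  conv_lhs => rw [← ContinuousLinearMap.isSelfAdjoint_iff'.mp (hsa S)]
  exact ContinuousLinearMap.adjoint_inner_left (E S) x y

lemma aux_idem (E : Set ℂ → (H₂ →L[ℂ] H₂))
    (hinter : ∀ S S', E S ∘L E S' = E (S ∩ S')) (S : Set ℂ) (w : H₂) :
    E S (E S w) = E S w := by
  have h := hinter S S
  rw [Set.inter_self] at h
  exact congrArg (fun f : H₂ →L[ℂ] H₂ => f w) h

lemma aux_sq_eq (E : Set ℂ → (H₂ →L[ℂ] H₂)) (hsa : ∀ S, IsSelfAdjoint (E S))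
    (hinter : ∀ S S', E S ∘L E S' = E (S ∩ S')) (S : Set ℂ) (w : H₂) :
    ‖E S w‖ ^ 2 = RCLike.re (inner ℂ w (E S w) : ℂ) := by
  have : (inner ℂ (E S w) (E S w) : ℂ) = inner ℂ w (E S w) := by
    rw [aux_move E hsa S, aux_idem E hinter]
  rw [← @inner_self_eq_norm_sq ℂ, this]

lemma aux_proj_norm_le (E : Set ℂ → (H₂ →L[ℂ] H₂)) (hsa : ∀ S, IsSelfAdjoint (E S))
    (hinter : ∀ S S', E S ∘L E S' = E (S ∩ S')) (S : Set ℂ) (w : H₂) :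
    ‖E S w‖ ≤ ‖w‖ := by
  rcases eq_or_lt_of_le (norm_nonneg (E S w)) with h0 | h0
  · rw [← h0]; exact norm_nonneg w
  have h1 : ‖E S w‖ ^ 2 ≤ ‖w‖ * ‖E S w‖ := by
    rw [aux_sq_eq E hsa hinter]
    calc RCLike.re (inner ℂ w (E S w) : ℂ) ≤ ‖(inner ℂ w (E S w) : ℂ)‖ := RCLike.re_le_norm _
      _ ≤ ‖w‖ * ‖E S w‖ := norm_inner_le_norm _ _
  rw [sq] at h1
  exact le_of_mul_le_mul_right (by linarith) h0

lemma aux_E_sum {κ : Type*} (E : Set ℂ → (H₂ →L[ℂ] H₂)) (hempty : E ∅ = 0)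
    (hadd : ∀ S S', Disjoint S S' → E (S ∪ S') = E S + E S') (Δ : κ → Set ℂ) :
    ∀ s : Finset κ, (∀ i ∈ s, ∀ j ∈ s, i ≠ j → Disjoint (Δ i) (Δ j)) →
      E (⋃ i ∈ s, Δ i) = ∑ i ∈ s, E (Δ i) := by
  classical
  intro s
  induction s using Finset.induction_on with
  | empty => intro _; simpa using hempty
  | @insert a s' ha ih =>
    intro hd
    rw [Finset.set_biUnion_insert, hadd _ _ ?_, Finset.sum_insert ha,
      ih fun i hi j hj hij => hd i (Finset.mem_insert_of_mem hi) j (Finset.mem_insert_of_mem hj) hij]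
    · rw [Set.disjoint_iUnion₂_right]
      intro i hi
      exact hd a (Finset.mem_insert_self a s') i (Finset.mem_insert_of_mem hi)
        (fun h => ha (h ▸ hi))

lemma aux_bessel_E {κ : Type*} (E : Set ℂ → (H₂ →L[ℂ] H₂)) (hsa : ∀ S, IsSelfAdjoint (E S))
    (hinter : ∀ S S', E S ∘L E S' = E (S ∩ S')) (hempty : E ∅ = 0)
    (hadd : ∀ S S', Disjoint S S' → E (S ∪ S') = E S + E S')
    (s : Finset κ) (Δ : κ → Set ℂ)
    (hdisj : ∀ i ∈ s, ∀ j ∈ s, i ≠ j → Disjoint (Δ i) (Δ j)) (w : H₂) :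
    ∑ i ∈ s, ‖E (Δ i) w‖ ^ 2 ≤ ‖w‖ ^ 2 := by
  have h1 : ∑ i ∈ s, ‖E (Δ i) w‖ ^ 2
      = RCLike.re (inner ℂ w ((E (⋃ i ∈ s, Δ i)) w) : ℂ) := by
    rw [aux_E_sum E hempty hadd Δ s hdisj, ContinuousLinearMap.sum_apply, inner_sum, map_sum]
    exact Finset.sum_congr rfl fun i _ => aux_sq_eq E hsa hinter (Δ i) w
  rw [h1, ← aux_sq_eq E hsa hinter]
  exact pow_le_pow_left₀ (norm_nonneg _) (aux_proj_norm_le E hsa hinter (⋃ i ∈ s, Δ i) w) 2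

lemma aux_orth_sum {κ : Type*} (E : Set ℂ → (H₂ →L[ℂ] H₂)) (hsa : ∀ S, IsSelfAdjoint (E S))
    (hinter : ∀ S S', E S ∘L E S' = E (S ∩ S')) (hempty : E ∅ = 0)
    (s : Finset κ) (Δ : κ → Set ℂ)
    (hdisj : ∀ i ∈ s, ∀ j ∈ s, i ≠ j → Disjoint (Δ i) (Δ j)) (v : κ → H₂) :
    ‖∑ i ∈ s, E (Δ i) (v i)‖ ^ 2 = ∑ i ∈ s, ‖E (Δ i) (v i)‖ ^ 2 := by
  have expand : (inner ℂ (∑ i ∈ s, E (Δ i) (v i)) (∑ j ∈ s, E (Δ j) (v j)) : ℂ)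
      = ∑ i ∈ s, (inner ℂ (E (Δ i) (v i)) (E (Δ i) (v i)) : ℂ) := by
    rw [sum_inner]
    refine Finset.sum_congr rfl fun i hi => ?_
    rw [inner_sum]
    refine Finset.sum_eq_single_of_mem i hi fun j hj hji => ?_
    rw [aux_move E hsa, ← ContinuousLinearMap.comp_apply, hinter,
      Set.disjoint_iff_inter_eq_empty.mp (hdisj i hi j hj (Ne.symm hji)), hempty]
    simp
  calc ‖∑ i ∈ s, E (Δ i) (v i)‖ ^ 2
      = RCLike.re (inner ℂ (∑ i ∈ s, E (Δ i) (v i)) (∑ j ∈ s, E (Δ j) (v j)) : ℂ) := by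
        rw [← @inner_self_eq_norm_sq ℂ]
    _ = ∑ i ∈ s, ‖E (Δ i) (v i)‖ ^ 2 := by
        rw [expand, map_sum]
        exact Finset.sum_congr rfl fun i _ => (by rw [← @inner_self_eq_norm_sq ℂ])

/-- The key Hilbert–Schmidt estimate for sums `∑ E(Δᵢ) B gᵢ`. -/
lemma aux_key {ι : Type*} (E : Set ℂ → (H₂ →L[ℂ] H₂)) (hsa : ∀ S, IsSelfAdjoint (E S))
    (hinter : ∀ S S', E S ∘L E S' = E (S ∩ S')) (hempty : E ∅ = 0)
    (hadd : ∀ S S', Disjoint S S' → E (S ∪ S') = E S + E S')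
    (e : HilbertBasis ι ℂ H₁) (B : H₁ →L[ℂ] H₂) (hHS : Summable fun i => ‖B (e i)‖ ^ 2)
    {κ : Type*} (s : Finset κ) (Δ : κ → Set ℂ)
    (hdisj : ∀ i ∈ s, ∀ j ∈ s, i ≠ j → Disjoint (Δ i) (Δ j))
    (g : κ → (H₁ →L[ℂ] H₁)) (M : ℝ) (hM : 0 ≤ M) (hg : ∀ i ∈ s, ‖g i‖ ≤ M) :
    ‖∑ i ∈ s, E (Δ i) ∘L (B ∘L g i)‖ ≤ M * Real.sqrt (∑' j, ‖B (e j)‖ ^ 2) := by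
  set S := ∑' j, ‖B (e j)‖ ^ 2 with hS
  have hS0 : 0 ≤ S := tsum_nonneg fun j => sq_nonneg _
  refine opNorm_le_bound _ (mul_nonneg hM (Real.sqrt_nonneg _)) fun x => ?_
  -- summability facts
  have hsummi : ∀ i : κ, Summable fun j => ‖E (Δ i) (B (e j))‖ ^ 2 := fun i =>
    hHS.of_nonneg_of_le (fun j => sq_nonneg _)
      (fun j => pow_le_pow_left₀ (norm_nonneg _) (aux_proj_norm_le E hsa hinter _ _) 2)
  have expand : (∑ i ∈ s, E (Δ i) ∘L (B ∘L g i)) x = ∑ i ∈ s, E (Δ i) (B (g i x)) := by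
    simp [ContinuousLinearMap.sum_apply]
  have h2 : ‖(∑ i ∈ s, E (Δ i) ∘L (B ∘L g i)) x‖ ^ 2 ≤ (M * Real.sqrt S * ‖x‖) ^ 2 := by
    rw [expand, aux_orth_sum E hsa hinter hempty s Δ hdisj]
    have step1 : ∀ i ∈ s, ‖E (Δ i) (B (g i x))‖ ^ 2
        ≤ (∑' j, ‖E (Δ i) (B (e j))‖ ^ 2) * (M * ‖x‖) ^ 2 := by
      intro i hi
      have hb : ‖E (Δ i) (B (g i x))‖ ≤ Real.sqrt (∑' j, ‖E (Δ i) (B (e j))‖ ^ 2) * (M * ‖x‖) := by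
        have hcomp : ‖(E (Δ i) ∘L B) (g i x)‖ ≤ ‖E (Δ i) ∘L B‖ * ‖g i x‖ := le_opNorm _ _
        have hop : ‖E (Δ i) ∘L B‖ ≤ Real.sqrt (∑' j, ‖E (Δ i) (B (e j))‖ ^ 2) := by
          have := aux_op_le_hs e (E (Δ i) ∘L B) (by simpa using hsummi i)
          simpa using this
        have hgx : ‖g i x‖ ≤ M * ‖x‖ :=
          (le_opNorm _ _).trans (mul_le_mul_of_nonneg_right (hg i hi) (norm_nonneg _))
        calc ‖E (Δ i) (B (g i x))‖ = ‖(E (Δ i) ∘L B) (g i x)‖ := by simp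
          _ ≤ ‖E (Δ i) ∘L B‖ * ‖g i x‖ := hcomp
          _ ≤ Real.sqrt (∑' j, ‖E (Δ i) (B (e j))‖ ^ 2) * (M * ‖x‖) :=
              mul_le_mul hop hgx (norm_nonneg _) (Real.sqrt_nonneg _)
      calc ‖E (Δ i) (B (g i x))‖ ^ 2
          ≤ (Real.sqrt (∑' j, ‖E (Δ i) (B (e j))‖ ^ 2) * (M * ‖x‖)) ^ 2 :=
            pow_le_pow_left₀ (norm_nonneg _) hb 2
        _ = (∑' j, ‖E (Δ i) (B (e j))‖ ^ 2) * (M * ‖x‖) ^ 2 := by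
            rw [mul_pow, Real.sq_sqrt (tsum_nonneg fun j => sq_nonneg _)]
    have step2 : ∑ i ∈ s, ‖E (Δ i) (B (g i x))‖ ^ 2
        ≤ (∑ i ∈ s, ∑' j, ‖E (Δ i) (B (e j))‖ ^ 2) * (M * ‖x‖) ^ 2 := by
      rw [Finset.sum_mul]
      exact Finset.sum_le_sum step1
    have swap : ∑ i ∈ s, ∑' j, ‖E (Δ i) (B (e j))‖ ^ 2
        = ∑' j, ∑ i ∈ s, ‖E (Δ i) (B (e j))‖ ^ 2 :=
      (Summable.tsum_finsetSum fun i _ => hsummi i).symm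
    have step3 : ∑' j, ∑ i ∈ s, ‖E (Δ i) (B (e j))‖ ^ 2 ≤ S := by
      refine Summable.tsum_le_tsum (fun j => aux_bessel_E E hsa hinter hempty hadd s Δ hdisj (B (e j)))
        ?_ hHS
      exact hHS.of_nonneg_of_le (fun j => Finset.sum_nonneg fun i _ => sq_nonneg _)
        (fun j => aux_bessel_E E hsa hinter hempty hadd s Δ hdisj (B (e j)))
    calc ∑ i ∈ s, ‖E (Δ i) (B (g i x))‖ ^ 2
        ≤ (∑ i ∈ s, ∑' j, ‖E (Δ i) (B (e j))‖ ^ 2) * (M * ‖x‖) ^ 2 := step2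
      _ ≤ S * (M * ‖x‖) ^ 2 := by
          refine mul_le_mul_of_nonneg_right ?_ (sq_nonneg _)
          rw [swap]; exact step3
      _ = (M * Real.sqrt S * ‖x‖) ^ 2 := by
          rw [mul_pow, mul_pow, mul_pow, Real.sq_sqrt hS0]; ring
  have h3 := Real.sqrt_le_sqrt h2
  rwa [Real.sqrt_sq (norm_nonneg _), Real.sqrt_sq (by positivity)] at h3

/-- Lipschitz bound for the resolvent. -/
lemma aux_res (Y : H₁ →L[ℂ] H₁) (C : ℝ) (σ' : Set ℂ)
    (hinv : ∀ μ ∈ σ', IsUnit (Y - μ • (1 : H₁ →L[ℂ] H₁)))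
    (hC : ∀ μ ∈ σ', ‖Ring.inverse (Y - μ • (1 : H₁ →L[ℂ] H₁))‖ ≤ C)
    {μ ν : ℂ} (hμ : μ ∈ σ') (hν : ν ∈ σ') :
    ‖(Ring.inverse (Y - μ • 1) : H₁ →L[ℂ] H₁) - Ring.inverse (Y - ν • 1)‖
      ≤ C * C * dist μ ν := by
  set a : H₁ →L[ℂ] H₁ := Y - μ • 1 with ha
  set b : H₁ →L[ℂ] H₁ := Y - ν • 1 with hb
  set Ra : H₁ →L[ℂ] H₁ := Ring.inverse a
  set Rb : H₁ →L[ℂ] H₁ := Ring.inverse b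
  have h1 : Ra * b * Rb = Ra := by
    rw [mul_assoc, Ring.mul_inverse_cancel b (hinv ν hν), mul_one]
  have h2 : Ra * a * Rb = Rb := by
    rw [Ring.inverse_mul_cancel a (hinv μ hμ), one_mul]
  have key : Ra - Rb = Ra * ((μ - ν) • (1 : H₁ →L[ℂ] H₁)) * Rb := by
    have hba : b - a = (μ - ν) • (1 : H₁ →L[ℂ] H₁) := by
      rw [ha, hb, sub_smul]; abel
    rw [← hba, mul_sub, sub_mul, h1, h2]
  rw [key]
  calc ‖Ra * ((μ - ν) • (1 : H₁ →L[ℂ] H₁)) * Rb‖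
      ≤ ‖Ra * ((μ - ν) • (1 : H₁ →L[ℂ] H₁))‖ * ‖Rb‖ := norm_mul_le _ _
    _ ≤ ‖Ra‖ * ‖(μ - ν) • (1 : H₁ →L[ℂ] H₁)‖ * ‖Rb‖ :=
        mul_le_mul_of_nonneg_right (norm_mul_le _ _) (norm_nonneg _)
    _ ≤ C * (‖μ - ν‖ * 1) * C := by
        have hone : ‖(1 : H₁ →L[ℂ] H₁)‖ ≤ 1 := by
          rw [ContinuousLinearMap.one_def]; exact ContinuousLinearMap.norm_id_le
        have hRa := hC μ hμ
        have hRb := hC ν hν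
        have hC0 : 0 ≤ C := (norm_nonneg Ra).trans hRa
        have hsm : ‖(μ - ν) • (1 : H₁ →L[ℂ] H₁)‖ ≤ ‖μ - ν‖ * 1 := by
          rw [norm_smul]
          exact mul_le_mul_of_nonneg_left hone (norm_nonneg _)
        exact mul_le_mul (mul_le_mul hRa hsm (norm_nonneg _) hC0) hRb (norm_nonneg _)
          (mul_nonneg hC0 (mul_nonneg (norm_nonneg _) zero_le_one))
    _ = C * C * dist μ ν := by rw [dist_eq_norm]; ring

lemma aux_partition (σ' : Set ℂ) (hb : Bornology.IsBounded σ') {δ : ℝ} (hδ : 0 < δ) :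
    ∃ (s : Finset (ℤ × ℤ)) (Δ : ℤ × ℤ → Set ℂ) (t : ℤ × ℤ → ℂ),
      IsTaggedPartition σ' δ s Δ t := by
  classical
  set r : ℝ := δ / 2 with hr
  have hr0 : 0 < r := by positivity
  set φ : ℂ → ℤ × ℤ := fun z => (⌊z.re / r⌋, ⌊z.im / r⌋) with hφ
  set Δ : ℤ × ℤ → Set ℂ := fun p => {z | z ∈ σ' ∧ φ z = p} with hΔ
  -- finiteness of the image
  obtain ⟨R, hR⟩ := (Metric.isBounded_iff_subset_closedBall 0).mp hb
  have hfin : (φ '' σ').Finite := by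
    refine Set.Finite.subset (Set.Finite.prod (Set.finite_Icc ⌊-(R / r)⌋ ⌊R / r⌋)
      (Set.finite_Icc ⌊-(R / r)⌋ ⌊R / r⌋)) ?_
    rintro p ⟨z, hz, rfl⟩
    have hz' : ‖z‖ ≤ R := by simpa using hR hz
    have h1 : |z.re| ≤ R := (Complex.abs_re_le_norm z).trans hz'
    have h2 : |z.im| ≤ R := (Complex.abs_im_le_norm z).trans hz'
    have hmono : ∀ x : ℝ, |x| ≤ R → ⌊-(R / r)⌋ ≤ ⌊x / r⌋ ∧ ⌊x / r⌋ ≤ ⌊R / r⌋ := by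
      intro x hx
      obtain ⟨hx1, hx2⟩ := abs_le.mp hx
      constructor
      · apply Int.floor_le_floor
        rw [← neg_div]
        exact (div_le_div_iff_of_pos_right hr0).mpr hx1
      · exact Int.floor_le_floor ((div_le_div_iff_of_pos_right hr0).mpr hx2)
    exact Set.mem_prod.mpr ⟨Set.mem_Icc.mpr (hmono _ h1), Set.mem_Icc.mpr (hmono _ h2)⟩
  refine ⟨hfin.toFinset, Δ, fun p => if h : (Δ p).Nonempty then h.some else 0, ?_, ?_, ?_⟩
  · intro p hp
    rw [Set.Finite.mem_toFinset] at hp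
    obtain ⟨z, hz, hzp⟩ := hp
    have hne : (Δ p).Nonempty := ⟨z, hz, hzp⟩
    refine ⟨fun w hw => hw.1, ?_, ?_⟩
    · show (if h : (Δ p).Nonempty then h.some else 0) ∈ Δ p
      rw [dif_pos hne]; exact hne.some_mem
    · refine Metric.diam_le_of_forall_dist_le hδ.le ?_
      rintro w ⟨_, hw⟩ v ⟨_, hv⟩
      have hre : |w.re - v.re| < r := by
        have : ⌊w.re / r⌋ = ⌊v.re / r⌋ := congrArg Prod.fst (hw.trans hv.symm)
        have h := Int.abs_sub_lt_one_of_floor_eq_floor this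
        have heq : (w.re / r - v.re / r) * r = w.re - v.re := by field_simp
        calc |w.re - v.re| = |w.re / r - v.re / r| * r := by
              rw [← heq, abs_mul, abs_of_pos hr0]
          _ < 1 * r := by exact mul_lt_mul_of_pos_right h hr0
          _ = r := one_mul r
      have him : |w.im - v.im| < r := by
        have : ⌊w.im / r⌋ = ⌊v.im / r⌋ := congrArg Prod.snd (hw.trans hv.symm)
        have h := Int.abs_sub_lt_one_of_floor_eq_floor this
        have heq : (w.im / r - v.im / r) * r = w.im - v.im := by field_simp
        calc |w.im - v.im| = |w.im / r - v.im / r| * r := by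
              rw [← heq, abs_mul, abs_of_pos hr0]
          _ < 1 * r := by exact mul_lt_mul_of_pos_right h hr0
          _ = r := one_mul r
      calc dist w v = ‖w - v‖ := Complex.dist_eq w v
        _ ≤ |(w - v).re| + |(w - v).im| := Complex.norm_le_abs_re_add_abs_im _
        _ = |w.re - v.re| + |w.im - v.im| := by simp [Complex.sub_re, Complex.sub_im]
        _ ≤ r + r := by linarith
        _ = δ := by rw [hr]; ring
  · intro p hp q hq hpq
    rw [Set.disjoint_left]
    rintro z ⟨_, hz1⟩ ⟨_, hz2⟩
    exact hpq (hz1 ▸ hz2 ▸ rfl)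
  · ext z
    constructor
    · intro hz
      refine Set.mem_iUnion₂.mpr ⟨φ z, ?_, hz, rfl⟩
      rw [Set.Finite.mem_toFinset]
      exact ⟨z, hz, rfl⟩
    · intro hz
      obtain ⟨p, _, hzp, _⟩ := Set.mem_iUnion₂.mp hz
      exact hzp

end AuxLemmas

theorem stmt12 {ι : Type*} (A₂ : H₂ →L[ℂ] H₂) (hA₂ : IsSelfAdjoint A₂)
    (E₂ : Set ℂ → (H₂ →L[ℂ] H₂)) (hE₂ : IsSpectralMeasureFor A₂ E₂)
    (B : H₁ →L[ℂ] H₂) (e : HilbertBasis ι ℂ H₁)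
    (hHS : Summable fun i => ‖B (e i)‖ ^ 2)
    (Y : H₁ →L[ℂ] H₁) (C : ℝ)
    (hinv : ∀ μ ∈ spectrum ℂ A₂, IsUnit (Y - μ • (1 : H₁ →L[ℂ] H₁)))
    (hC : ∀ μ ∈ spectrum ℂ A₂, ‖Ring.inverse (Y - μ • (1 : H₁ →L[ℂ] H₁))‖ ≤ C) :
    ∃ T : H₁ →L[ℂ] H₂,
      IsSpectralIntegral E₂ (spectrum ℂ A₂)
        (fun μ => B ∘L Ring.inverse (Y - μ • 1)) T ∧
      ‖T‖ ≤ C * Real.sqrt (∑' i, ‖B (e i)‖ ^ 2) := by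
  classical
  rcases subsingleton_or_nontrivial H₂ with hH | hH
  · -- degenerate case
    haveI : Subsingleton (H₁ →L[ℂ] H₂) :=
      ⟨fun f g => ContinuousLinearMap.ext fun x => Subsingleton.elim _ _⟩
    refine ⟨0, fun ε hε => ⟨1, one_pos, fun κ s Δ t _ => ?_⟩, ?_⟩
    · rw [Subsingleton.elim ((∑ i ∈ s, E₂ (Δ i) ∘L (B ∘L Ring.inverse (Y - t i • 1))) - 0)
        (0 : H₁ →L[ℂ] H₂), norm_zero]
      exact hε
    · have hB0 : ∀ i, B (e i) = 0 := fun i => Subsingleton.elim _ _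
      simp [hB0, norm_zero]
  · -- main case
    set σ' : Set ℂ := spectrum ℂ A₂ with hσ'
    haveI : Nontrivial (H₂ →L[ℂ] H₂) := by
      obtain ⟨w, hw⟩ := exists_ne (0 : H₂)
      refine ⟨1, 0, fun h => hw ?_⟩
      have := congrArg (fun f : H₂ →L[ℂ] H₂ => f w) h
      simpa using this
    have hσne : σ'.Nonempty := spectrum.nonempty A₂
    obtain ⟨μ₀, hμ₀⟩ := hσne
    have hC0 : 0 ≤ C := le_trans (norm_nonneg _) (hC μ₀ hμ₀)
    have hbd : Bornology.IsBounded σ' := (spectrum.isCompact A₂).isBounded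
    set K : ℝ := Real.sqrt (∑' i, ‖B (e i)‖ ^ 2) with hK
    have hK0 : 0 ≤ K := Real.sqrt_nonneg _
    -- convenient abbreviations
    have hsa := hE₂.selfAdjoint
    have hinter := hE₂.inter
    have hempty := hE₂.empty
    have hadd := hE₂.add
    -- norm bound for a single partition sum
    have hnorm : ∀ (κ : Type) (s : Finset κ) (Δ : κ → Set ℂ) (t : κ → ℂ) (δ : ℝ),
        IsTaggedPartition σ' δ s Δ t →
        ‖∑ i ∈ s, E₂ (Δ i) ∘L (B ∘L Ring.inverse (Y - t i • 1))‖ ≤ C * K := by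
      intro κ s Δ t δ hPT
      refine aux_key E₂ hsa hinter hempty hadd e B hHS s Δ hPT.2.1
        (fun i => Ring.inverse (Y - t i • 1)) C hC0 fun i hi => ?_
      have hti : t i ∈ σ' := (hPT.1 i hi).1 (hPT.1 i hi).2.1
      exact hC (t i) hti
    -- difference bound for two partition sums
    have hdiff : ∀ (κ₁ : Type) (s₁ : Finset κ₁) (Δ₁ : κ₁ → Set ℂ) (t₁ : κ₁ → ℂ) (δ₁ : ℝ)
        (κ₂ : Type) (s₂ : Finset κ₂) (Δ₂ : κ₂ → Set ℂ) (t₂ : κ₂ → ℂ) (δ₂ : ℝ),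
        0 ≤ δ₁ → 0 ≤ δ₂ →
        IsTaggedPartition σ' δ₁ s₁ Δ₁ t₁ → IsTaggedPartition σ' δ₂ s₂ Δ₂ t₂ →
        ‖(∑ i ∈ s₁, E₂ (Δ₁ i) ∘L (B ∘L Ring.inverse (Y - t₁ i • 1)))
          - ∑ j ∈ s₂, E₂ (Δ₂ j) ∘L (B ∘L Ring.inverse (Y - t₂ j • 1))‖
          ≤ C * C * (δ₁ + δ₂) * K := by
      intro κ₁ s₁ Δ₁ t₁ δ₁ κ₂ s₂ Δ₂ t₂ δ₂ hδ₁ hδ₂ hP₁ hP₂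
      obtain ⟨hm₁, hd₁, hu₁⟩ := hP₁
      obtain ⟨hm₂, hd₂, hu₂⟩ := hP₂
      set F : κ₁ × κ₂ → Set ℂ := fun p => Δ₁ p.1 ∩ Δ₂ p.2 with hF
      -- refinement identities
      have href₁ : ∀ i ∈ s₁, E₂ (Δ₁ i) = ∑ j ∈ s₂, E₂ (Δ₁ i ∩ Δ₂ j) := by
        intro i hi
        have hu : (⋃ j ∈ s₂, Δ₁ i ∩ Δ₂ j) = Δ₁ i := by
          rw [← Set.inter_iUnion₂, ← hu₂, Set.inter_eq_left]
          exact (hm₁ i hi).1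
        conv_lhs => rw [← hu]
        exact aux_E_sum E₂ hempty hadd _ s₂ fun a ha b hb hab =>
          ((hd₂ a ha b hb hab).mono Set.inter_subset_right Set.inter_subset_right)
      have href₂ : ∀ j ∈ s₂, E₂ (Δ₂ j) = ∑ i ∈ s₁, E₂ (Δ₁ i ∩ Δ₂ j) := by
        intro j hj
        have hu : (⋃ i ∈ s₁, Δ₁ i ∩ Δ₂ j) = Δ₂ j := by
          rw [← Set.iUnion₂_inter, ← hu₁, Set.inter_eq_right]
          exact (hm₂ j hj).1
        conv_lhs => rw [← hu]
        exact aux_E_sum E₂ hempty hadd _ s₁ fun a ha b hb hab =>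
          ((hd₁ a ha b hb hab).mono Set.inter_subset_left Set.inter_subset_left)
      have hsum₁ : (∑ i ∈ s₁, E₂ (Δ₁ i) ∘L (B ∘L Ring.inverse (Y - t₁ i • 1)))
          = ∑ p ∈ s₁ ×ˢ s₂, E₂ (F p) ∘L (B ∘L Ring.inverse (Y - t₁ p.1 • 1)) := by
        rw [Finset.sum_product]
        refine Finset.sum_congr rfl fun i hi => ?_
        rw [href₁ i hi, ContinuousLinearMap.finset_sum_comp]
      have hsum₂ : (∑ j ∈ s₂, E₂ (Δ₂ j) ∘L (B ∘L Ring.inverse (Y - t₂ j • 1)))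
          = ∑ p ∈ s₁ ×ˢ s₂, E₂ (F p) ∘L (B ∘L Ring.inverse (Y - t₂ p.2 • 1)) := by
        rw [Finset.sum_product, Finset.sum_comm]
        refine Finset.sum_congr rfl fun j hj => ?_
        rw [href₂ j hj, ContinuousLinearMap.finset_sum_comp]
      rw [hsum₁, hsum₂, ← Finset.sum_sub_distrib]
      have hterm : ∀ p : κ₁ × κ₂,
          E₂ (F p) ∘L (B ∘L Ring.inverse (Y - t₁ p.1 • 1))
            - E₂ (F p) ∘L (B ∘L Ring.inverse (Y - t₂ p.2 • 1))
          = E₂ (F p) ∘L (B ∘L (Ring.inverse (Y - t₁ p.1 • 1) - Ring.inverse (Y - t₂ p.2 • 1))) := by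
        intro p
        rw [← ContinuousLinearMap.comp_sub, ← ContinuousLinearMap.comp_sub]
      rw [Finset.sum_congr rfl fun p _ => hterm p]
      -- restrict to nonempty pieces
      haveI : DecidablePred fun p : κ₁ × κ₂ => (F p).Nonempty := fun _ => Classical.dec _
      set s' : Finset (κ₁ × κ₂) := (s₁ ×ˢ s₂).filter (fun p : κ₁ × κ₂ => (F p).Nonempty) with hs'
      have hzero : ∀ p ∈ s₁ ×ˢ s₂, p ∉ s' →
          E₂ (F p) ∘L (B ∘L (Ring.inverse (Y - t₁ p.1 • 1) - Ring.inverse (Y - t₂ p.2 • 1))) = 0 := by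
        intro p hps hp
        have hne : ¬(F p).Nonempty := fun h => hp (Finset.mem_filter.mpr ⟨hps, h⟩)
        rw [Set.not_nonempty_iff_eq_empty] at hne
        rw [hne, hempty, ContinuousLinearMap.zero_comp]
      rw [← Finset.sum_subset (Finset.filter_subset _ _) hzero]
      refine (aux_key E₂ hsa hinter hempty hadd e B hHS s' F ?_ _ (C * C * (δ₁ + δ₂))
          (by positivity) ?_)
      · intro p hp q hq hpq
        rcases eq_or_ne p.1 q.1 with h1 | h1
        · have h2 : p.2 ≠ q.2 := fun h2 => hpq (Prod.ext h1 h2)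
          exact ((hd₂ p.2 (Finset.mem_product.mp (Finset.mem_filter.mp hp).1).2
            q.2 (Finset.mem_product.mp (Finset.mem_filter.mp hq).1).2 h2).mono
            Set.inter_subset_right Set.inter_subset_right)
        · exact ((hd₁ p.1 (Finset.mem_product.mp (Finset.mem_filter.mp hp).1).1
            q.1 (Finset.mem_product.mp (Finset.mem_filter.mp hq).1).1 h1).mono
            Set.inter_subset_left Set.inter_subset_left)
      · intro p hp
        obtain ⟨hps, hpne⟩ := Finset.mem_filter.mp hp
        obtain ⟨hp1, hp2⟩ := Finset.mem_product.mp hps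
        obtain ⟨z, hz1, hz2⟩ := hpne
        have hb₁ : Bornology.IsBounded (Δ₁ p.1) := hbd.subset (hm₁ p.1 hp1).1
        have hb₂ : Bornology.IsBounded (Δ₂ p.2) := hbd.subset (hm₂ p.2 hp2).1
        have hd1 : dist (t₁ p.1) z ≤ δ₁ :=
          (Metric.dist_le_diam_of_mem hb₁ (hm₁ p.1 hp1).2.1 hz1).trans (hm₁ p.1 hp1).2.2
        have hd2 : dist z (t₂ p.2) ≤ δ₂ :=
          (Metric.dist_le_diam_of_mem hb₂ hz2 (hm₂ p.2 hp2).2.1).trans (hm₂ p.2 hp2).2.2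
        have hdist : dist (t₁ p.1) (t₂ p.2) ≤ δ₁ + δ₂ :=
          (dist_triangle _ z _).trans (add_le_add hd1 hd2)
        have hμ : t₁ p.1 ∈ σ' := (hm₁ p.1 hp1).1 (hm₁ p.1 hp1).2.1
        have hν : t₂ p.2 ∈ σ' := (hm₂ p.2 hp2).1 (hm₂ p.2 hp2).2.1
        calc ‖Ring.inverse (Y - t₁ p.1 • 1) - Ring.inverse (Y - t₂ p.2 • (1 : H₁ →L[ℂ] H₁))‖
            ≤ C * C * dist (t₁ p.1) (t₂ p.2) := aux_res Y C σ' hinv hC hμ hν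
          _ ≤ C * C * (δ₁ + δ₂) := by
              exact mul_le_mul_of_nonneg_left hdist (by positivity)
    -- sequence of partitions
    have hex : ∀ n : ℕ, ∃ (s : Finset (ℤ × ℤ)) (Δ : ℤ × ℤ → Set ℂ) (t : ℤ × ℤ → ℂ),
        IsTaggedPartition σ' (1 / (n + 1)) s Δ t := fun n =>
      aux_partition σ' hbd (by positivity)
    choose ps pΔ pt hp using hex
    set W : ℕ → (H₁ →L[ℂ] H₂) :=
      fun n => ∑ i ∈ ps n, E₂ (pΔ n i) ∘L (B ∘L Ring.inverse (Y - pt n i • 1)) with hW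
    have hmesh : ∀ n : ℕ, (0 : ℝ) ≤ 1 / (n + 1) := fun n => by positivity
    have hcau : CauchySeq W := by
      refine cauchySeq_of_le_tendsto_0 (fun N => C * C * (1 / (N + 1) + 1 / (N + 1)) * K)
        (fun n m N hn hm => ?_) ?_
      · rw [dist_eq_norm]
        have h1 : (1 : ℝ) / (n + 1) ≤ 1 / (N + 1) := by
          apply one_div_le_one_div_of_le (by positivity)
          have : (N : ℝ) ≤ n := Nat.cast_le.mpr hn
          linarith
        have h2 : (1 : ℝ) / (m + 1) ≤ 1 / (N + 1) := by
          apply one_div_le_one_div_of_le (by positivity)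
          have : (N : ℝ) ≤ m := Nat.cast_le.mpr hm
          linarith
        calc ‖W n - W m‖ ≤ C * C * (1 / (n + 1) + 1 / (m + 1)) * K :=
              hdiff _ _ _ _ _ _ _ _ _ _ (hmesh n) (hmesh m) (hp n) (hp m)
          _ ≤ C * C * (1 / (N + 1) + 1 / (N + 1)) * K := by
              have hCC : (0:ℝ) ≤ C * C := by positivity
              have := add_le_add h1 h2
              exact mul_le_mul_of_nonneg_right (mul_le_mul_of_nonneg_left this hCC) hK0
      · have hbase : Filter.Tendsto (fun N : ℕ => (1 : ℝ) / (N + 1)) Filter.atTop (nhds 0) :=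
          tendsto_one_div_add_atTop_nhds_zero_nat
        have : Filter.Tendsto (fun N : ℕ => C * C * (1 / (N + 1) + 1 / (N + 1)) * K)
            Filter.atTop (nhds (C * C * (0 + 0) * K)) := by
          exact (((hbase.add hbase).const_mul (C * C)).mul_const K)
        simpa using this
    obtain ⟨T, hT⟩ := cauchySeq_tendsto_of_complete hcau
    refine ⟨T, ?_, ?_⟩
    · -- spectral integral
      intro ε hε
      set D : ℝ := C * C * K + 1 with hD
      have hD0 : 0 < D := by positivity
      refine ⟨ε / (2 * D), by positivity, ?_⟩
      intro κ s Δ t hPT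
      have key : ‖(∑ i ∈ s, E₂ (Δ i) ∘L (B ∘L Ring.inverse (Y - t i • 1))) - T‖ < ε := by
        set U : H₁ →L[ℂ] H₂ := ∑ i ∈ s, E₂ (Δ i) ∘L (B ∘L Ring.inverse (Y - t i • 1)) with hU
        have hbound : ∀ n : ℕ,
            ‖U - T‖ ≤ C * C * (ε / (2 * D) + 1 / (n + 1)) * K + ‖W n - T‖ := by
          intro n
          calc ‖U - T‖ ≤ ‖U - W n‖ + ‖W n - T‖ := by
                have := norm_sub_le_norm_sub_add_norm_sub U (W n) T
                exact this
            _ ≤ C * C * (ε / (2 * D) + 1 / (n + 1)) * K + ‖W n - T‖ := by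
                refine add_le_add ?_ (le_refl _)
                exact hdiff _ _ _ _ _ _ _ _ _ _ (by positivity) (hmesh n) hPT (hp n)
        have htend : Filter.Tendsto
            (fun n : ℕ => C * C * (ε / (2 * D) + 1 / (n + 1)) * K + ‖W n - T‖)
            Filter.atTop (nhds (C * C * (ε / (2 * D) + 0) * K + 0)) := by
          refine Filter.Tendsto.add ?_ ?_
          · exact (((tendsto_const_nhds.add tendsto_one_div_add_atTop_nhds_zero_nat).const_mul
              (C * C)).mul_const K)
          · have : Filter.Tendsto (fun n => W n - T) Filter.atTop (nhds (T - T)) :=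
              hT.sub tendsto_const_nhds
            rw [sub_self] at this
            simpa using this.norm
        have hle : ‖U - T‖ ≤ C * C * (ε / (2 * D) + 0) * K + 0 :=
          ge_of_tendsto htend (Filter.Eventually.of_forall hbound)
        have heq : C * C * (ε / (2 * D) + 0) * K + 0 = (C * C * K) * (ε / (2 * D)) := by ring
        have hlt : (C * C * K) * (ε / (2 * D)) < ε := by
          have h1 : (C * C * K) * (ε / (2 * D)) < D * (ε / (2 * D)) := by
            refine mul_lt_mul_of_pos_right ?_ (by positivity)
            rw [hD]; linarith [mul_nonneg (mul_nonneg hC0 hC0) hK0]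
          have h2 : D * (ε / (2 * D)) = ε / 2 := by
            field_simp
          linarith
        calc ‖U - T‖ ≤ C * C * (ε / (2 * D) + 0) * K + 0 := hle
          _ = (C * C * K) * (ε / (2 * D)) := heq
          _ < ε := hlt
      exact key
    · -- norm bound
      refine le_of_tendsto hT.norm (Filter.Eventually.of_forall fun n => ?_)
      exact hnorm _ _ _ _ _ (hp n)
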